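/- Let (X,W,d) be a convex metric space, let T : X → X be nonexpansive (d(Tx,Ty) ≤ d(x,y) for all x, y ∈ X), and suppose the function f : X → ℝ defined by f(x) = d(x, Tx) is strictly W-convex and has a local minimum at ξ ∈ X (there is an open neighborhood U of ξ with f(ξ) ≤ f(x) for all x ∈ U). Then Tξ = ξ. -/
import Mathlib


/-- If `T : X → X` is nonexpansive on a convex metric space and the
function `f(x) = d(x, Tx)` is strictly `W`-convex with a local minimum at `ξ`, then
`ξ` is a fixed point of `T`. -/
theorem stmt_18 {X : Type*} [MetricSpace X] (W : X → X → ℝ → X)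
    (hWcont : ContinuousOn (fun p : X × X × ℝ => W p.1 p.2.1 p.2.2)
      (Set.univ ×ˢ Set.univ ×ˢ Set.Icc (0:ℝ) 1))
    (hW : ∀ (u x y : X), ∀ t ∈ Set.Icc (0:ℝ) 1,
      dist u (W x y t) ≤ (1 - t) * dist u x + t * dist u y)
    (T : X → X) (hT : ∀ x y : X, dist (T x) (T y) ≤ dist x y)
    (hf : ∀ (x y : X), x ≠ y → ∀ t ∈ Set.Ioo (0:ℝ) 1,
      dist (W x y t) (T (W x y t)) <
        (1 - t) * dist x (T x) + t * dist y (T y))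
    (ξ : X) (U : Set X) (hU : IsOpen U) (hξU : ξ ∈ U)
    (hmin : ∀ x ∈ U, dist ξ (T ξ) ≤ dist x (T x)) :
    T ξ = ξ := by
  by_contra h
  -- W ξ (Tξ) 0 = ξ
  have h0 : (0:ℝ) ∈ Set.Icc (0:ℝ) 1 := by norm_num
  have hW0 : W ξ (T ξ) 0 = ξ := by
    have := hW ξ ξ (T ξ) 0 h0
    simp at this
    exact this.symm
  -- continuity of t ↦ W ξ (Tξ) t at 0 within Icc 0 1
  have hc : ContinuousWithinAt (fun t : ℝ => W ξ (T ξ) t) (Set.Icc 0 1) 0 := by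
    have hmem : ((ξ, (T ξ, (0:ℝ))) : X × X × ℝ) ∈
        (Set.univ ×ˢ Set.univ ×ˢ Set.Icc (0:ℝ) 1) := by
      simp [h0]
    have h1 := (hWcont (ξ, (T ξ, (0:ℝ))) hmem)
    have h2 : ContinuousWithinAt (fun t : ℝ => ((ξ, (T ξ, t)) : X × X × ℝ))
        (Set.Icc 0 1) 0 :=
      (Continuous.continuousWithinAt (by continuity))
    have hm : Set.MapsTo (fun t : ℝ => ((ξ, (T ξ, t)) : X × X × ℝ)) (Set.Icc 0 1)
        (Set.univ ×ˢ Set.univ ×ˢ Set.Icc (0:ℝ) 1) := by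
      intro t ht; simpa using ht
    show ContinuousWithinAt ((fun p : X × X × ℝ => W p.1 p.2.1 p.2.2) ∘
        (fun t : ℝ => ((ξ, (T ξ, t)) : X × X × ℝ))) (Set.Icc 0 1) 0
    exact ContinuousWithinAt.comp h1 h2 hm
  have htend : Filter.Tendsto (fun t : ℝ => W ξ (T ξ) t) (nhdsWithin 0 (Set.Icc 0 1)) (nhds ξ) := by
    simpa [hW0] using hc.tendsto
  have hUnhds : U ∈ nhds ξ := hU.mem_nhds hξU
  have hpre : (fun t : ℝ => W ξ (T ξ) t) ⁻¹' U ∈ nhdsWithin 0 (Set.Icc 0 1) :=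
    htend hUnhds
  have hle : nhdsWithin (0:ℝ) (Set.Ioo 0 1) ≤ nhdsWithin 0 (Set.Icc 0 1) :=
    nhdsWithin_mono _ Set.Ioo_subset_Icc_self
  have hpre' : (fun t : ℝ => W ξ (T ξ) t) ⁻¹' U ∈ nhdsWithin (0:ℝ) (Set.Ioo 0 1) :=
    hle hpre
  have hne : (nhdsWithin (0:ℝ) (Set.Ioo 0 1)).NeBot := by
    apply mem_closure_iff_nhdsWithin_neBot.mp
    rw [closure_Ioo (by norm_num : (0:ℝ) ≠ 1)]
    exact ⟨le_refl 0, by norm_num⟩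
  obtain ⟨t, htU, ht⟩ := Filter.nonempty_of_mem (Filter.inter_mem hpre' self_mem_nhdsWithin)
  -- now derive contradiction
  have hne' : ξ ≠ T ξ := fun hh => h hh.symm
  have hstrict := hf ξ (T ξ) hne' t ht
  have hminz := hmin _ htU
  have hTT : dist (T ξ) (T (T ξ)) ≤ dist ξ (T ξ) := hT ξ (T ξ)
  have ht0 := ht.1
  have ht1 := ht.2
  nlinarith [hminz, hstrict, hTT, dist_nonneg (x := ξ) (y := T ξ)]
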